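/- arXiv:1508.05936 — 5 statements merged into one kernel-verified Lean document; each statement's English description precedes it below -/
import Mathlib

section
/- Let (H, Γ₁, Γ₂) be a boundary triplet for a closed densely defined symmetric operator T, and let K be a contraction on H. Then the restriction L_K of T* to { f ∈ Dom(T*) : (K − I)Γ₁f + i(K + I)Γ₂f = 0 } is a dissipative extension of T, i.e., Im(L_K f, f) ≥ 0 for all f ∈ Dom(L_K). -/
/-!
Taking `f = g` in the Green identity gives `Im (T* f, f) = -Im (Γ₁ f, Γ₂ f)`. The boundary
condition says exactly that `K` maps `Γ₁ f + i Γ₂ f` to `Γ₁ f - i Γ₂ f`, so contractivity of `K`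
yields `‖Γ₁ f - i Γ₂ f‖ ≤ ‖Γ₁ f + i Γ₂ f‖`, which by polarization is `Im (Γ₁ f, Γ₂ f) ≤ 0`.
That `L_K` extends `T` holds because both boundary values of `f ∈ Dom T` vanish: the Green form
of such an `f` is zero against every `g ∈ Dom T*`, and the boundary map is onto `B × B`.
-/

open MeasureTheory

local notation "⟪" x ", " y "⟫" => @inner ℂ _ _ x y

/-- `(B, Γ₁, Γ₂)` is a boundary triplet for the closed densely defined symmetric operator `T`:
the abstract Green identity holds on `Dom T*` and the joint boundary map is surjective. -/
def IsBoundaryTriplet {E B : Type*} [NormedAddCommGroup E] [InnerProductSpace ℂ E]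
    [CompleteSpace E] [NormedAddCommGroup B] [InnerProductSpace ℂ B]
    (T : E →ₗ.[ℂ] E) (Γ₁ Γ₂ : T.adjoint.domain →ₗ[ℂ] B) : Prop :=
  (∀ f g : T.adjoint.domain,
      ⟪T.adjoint f, (g : E)⟫ - ⟪(f : E), T.adjoint g⟫ = ⟪Γ₁ f, Γ₂ g⟫ - ⟪Γ₂ f, Γ₁ g⟫) ∧
  (∀ b₁ b₂ : B, ∃ f : T.adjoint.domain, Γ₁ f = b₁ ∧ Γ₂ f = b₂)

section

variable {E B : Type*} [NormedAddCommGroup E] [InnerProductSpace ℂ E] [CompleteSpace E]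
  [NormedAddCommGroup B] [InnerProductSpace ℂ B]

theorem LinearPMap.inner_adjoint_sub_inner_adjoint_eq_zero {T : E →ₗ.[ℂ] E}
    (hd : Dense (T.domain : Set E)) (hle : T ≤ T.adjoint) (f : T.domain)
    (g : T.adjoint.domain) :
    ⟪T.adjoint ⟨f, hle.1 f.2⟩, (g : E)⟫ - ⟪(f : E), T.adjoint g⟫ = 0 := by
  have hTf : T.adjoint ⟨f, hle.1 f.2⟩ = T f := (hle.2 rfl).symm
  have hgf : ⟪T.adjoint g, (f : E)⟫ = ⟪(g : E), T f⟫ := T.adjoint_isFormalAdjoint hd g f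
  rw [hTf, ← inner_conj_symm (f : E), hgf, inner_conj_symm, sub_self]

theorem IsBoundaryTriplet.boundary_eq_zero_of_forall_green_eq_zero
    {T : E →ₗ.[ℂ] E} {Γ₁ Γ₂ : T.adjoint.domain →ₗ[ℂ] B} (ht : IsBoundaryTriplet T Γ₁ Γ₂)
    {f : T.adjoint.domain} (hf : ∀ g : T.adjoint.domain,
      ⟪T.adjoint f, (g : E)⟫ - ⟪(f : E), T.adjoint g⟫ = 0) :
    Γ₁ f = 0 ∧ Γ₂ f = 0 := by
  obtain ⟨hgreen, hsurj⟩ := ht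
  obtain ⟨g₁, hg₁, hg₂⟩ := hsurj 0 (Γ₁ f)
  obtain ⟨g₂, hg₁', hg₂'⟩ := hsurj (Γ₂ f) 0
  have h₁ := hf g₁
  have h₂ := hf g₂
  rw [hgreen, hg₁, hg₂, inner_zero_right, sub_zero] at h₁
  rw [hgreen, hg₁', hg₂', inner_zero_right, zero_sub, neg_eq_zero] at h₂
  exact ⟨inner_self_eq_zero.mp h₁, inner_self_eq_zero.mp h₂⟩

theorem IsBoundaryTriplet.im_inner_adjoint_eq_neg_im_inner_boundary
    {T : E →ₗ.[ℂ] E} {Γ₁ Γ₂ : T.adjoint.domain →ₗ[ℂ] B} (ht : IsBoundaryTriplet T Γ₁ Γ₂)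
    (f : T.adjoint.domain) :
    (⟪(f : E), T.adjoint f⟫).im = -(⟪Γ₁ f, Γ₂ f⟫).im := by
  have h := congrArg Complex.im (ht.1 f f)
  have hE := inner_im_symm (𝕜 := ℂ) (T.adjoint f) (f : E)
  have hB := inner_im_symm (𝕜 := ℂ) (Γ₂ f) (Γ₁ f)
  simp only [RCLike.im_to_complex, Complex.sub_im] at h hE hB
  linarith

theorem ContinuousLinearMap.apply_add_I_smul_eq_sub_I_smul {K : B →L[ℂ] B} {u v : B}
    (h : (K - 1) u + Complex.I • (K + 1) v = 0) : K (u + Complex.I • v) = u - Complex.I • v := by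
  simp only [sub_apply, add_apply, one_apply_eq_self] at h
  rw [map_add, map_smul]
  linear_combination (norm := module) h

theorem im_inner_nonpos_of_norm_le_one {K : B →L[ℂ] B} (hK : ‖K‖ ≤ 1) {u v : B}
    (h : K (u + Complex.I • v) = u - Complex.I • v) : (⟪u, v⟫).im ≤ 0 := by
  have hle : ‖u - Complex.I • v‖ ≤ ‖u + Complex.I • v‖ :=
    h ▸ K.le_of_opNorm_le hK (u + Complex.I • v) |>.trans_eq (one_mul _)
  have hpol := im_inner_eq_norm_sub_i_smul_mul_self_sub_norm_add_i_smul_mul_self_div_four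
    (𝕜 := ℂ) u v
  simp only [RCLike.im_to_complex, RCLike.I_to_complex] at hpol
  rw [hpol]
  have := mul_self_le_mul_self (norm_nonneg _) hle
  linarith

end

theorem restriction_dissipative_extension_general
    {E B : Type*} [NormedAddCommGroup E] [InnerProductSpace ℂ E] [CompleteSpace E]
    [NormedAddCommGroup B] [InnerProductSpace ℂ B]
    (T : E →ₗ.[ℂ] E)
    (hd : Dense (T.domain : Set E))
    (hsym : ∀ f g : T.domain, ⟪T f, (g : E)⟫ = ⟪(f : E), T g⟫)
    (Γ₁ Γ₂ : T.adjoint.domain →ₗ[ℂ] B) (ht : IsBoundaryTriplet T Γ₁ Γ₂)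
    (K : B →L[ℂ] B) (hK : ‖K‖ ≤ 1) :
    -- `L_K` extends `T` : every `f ∈ Dom T` lies in `Dom L_K`
    (∀ f : T.domain, ∃ hf : (f : E) ∈ T.adjoint.domain,
      (K - 1) (Γ₁ ⟨(f : E), hf⟩) + Complex.I • ((K + 1) (Γ₂ ⟨(f : E), hf⟩)) = 0) ∧
    -- `L_K` is dissipative : `Im (L_K f, f) ≥ 0` on its domain
    (∀ f : T.adjoint.domain,
      (K - 1) (Γ₁ f) + Complex.I • ((K + 1) (Γ₂ f)) = 0 →
      0 ≤ (⟪(f : E), T.adjoint f⟫).im) := by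
  have hle : T ≤ T.adjoint := LinearPMap.IsFormalAdjoint.le_adjoint hd hsym
  refine ⟨fun f => ⟨hle.1 f.2, ?_⟩, fun f hbc => ?_⟩
  · obtain ⟨h₁, h₂⟩ := ht.boundary_eq_zero_of_forall_green_eq_zero
      (T.inner_adjoint_sub_inner_adjoint_eq_zero hd hle f)
    rw [h₁, h₂, map_zero, map_zero, smul_zero, add_zero]
  · rw [ht.im_inner_adjoint_eq_neg_im_inner_boundary, neg_nonneg]
    exact im_inner_nonpos_of_norm_le_one hK (K.apply_add_I_smul_eq_sub_I_smul hbc)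

/-- For a contraction `K`, the restriction `L_K` of `T*` by the boundary condition
`(K − I)Γ₁f + i(K + I)Γ₂f = 0` is a dissipative extension of `T`. -/
theorem restriction_dissipative_extension
    {E B : Type*} [NormedAddCommGroup E] [InnerProductSpace ℂ E] [CompleteSpace E]
    [NormedAddCommGroup B] [InnerProductSpace ℂ B]
    (T : E →ₗ.[ℂ] E)
    (hd : Dense (T.domain : Set E)) (hc : T.IsClosed)
    (hsym : ∀ f g : T.domain, ⟪T f, (g : E)⟫ = ⟪(f : E), T g⟫)
    (Γ₁ Γ₂ : T.adjoint.domain →ₗ[ℂ] B) (ht : IsBoundaryTriplet T Γ₁ Γ₂)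
    (K : B →L[ℂ] B) (hK : ‖K‖ ≤ 1) :
    -- `L_K` extends `T` : every `f ∈ Dom T` lies in `Dom L_K`
    (∀ f : T.domain, ∃ hf : (f : E) ∈ T.adjoint.domain,
      (K - 1) (Γ₁ ⟨(f : E), hf⟩) + Complex.I • ((K + 1) (Γ₂ ⟨(f : E), hf⟩)) = 0) ∧
    -- `L_K` is dissipative : `Im (L_K f, f) ≥ 0` on its domain
    (∀ f : T.adjoint.domain,
      (K - 1) (Γ₁ f) + Complex.I • ((K + 1) (Γ₂ f)) = 0 →
      0 ≤ (⟪(f : E), T.adjoint f⟫).im) :=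
  restriction_dissipative_extension_general T hd hsym Γ₁ Γ₂ ht K hK
end

section
/- Let (H, Γ₁, Γ₂) be a boundary triplet for a closed densely defined symmetric operator T, and let K be a contraction on H. Then the restriction L^K of T* to { f ∈ Dom(T*) : (K − I)Γ₁f − i(K + I)Γ₂f = 0 } is an accumulative extension of T, i.e., Im(L^K f, f) ≤ 0 for all f ∈ Dom(L^K). -/
open MeasureTheory

local notation "⟪" x ", " y "⟫" => @inner ℂ _ _ x y

/-! Green's identity at `(f, f)` gives `Im ⟪f, T* f⟫ = -Im ⟪Γ₁ f, Γ₂ f⟫`, while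
`‖u - i v‖² - ‖u + i v‖² = 4 Im ⟪u, v⟫`. The boundary condition says `K (Γ₁ f - i Γ₂ f) = Γ₁ f + i Γ₂ f`,
so for a contraction `K` the second norm is at most the first and `Im ⟪f, T* f⟫ ≤ 0`.
Vectors of `Dom T` satisfy the boundary condition because Green's identity and surjectivity
of `(Γ₁, Γ₂)` force `Γ₁ f = Γ₂ f = 0` on them. -/

open Complex

section InnerProduct

variable {B : Type*} [NormedAddCommGroup B] [InnerProductSpace ℂ B]

theorem norm_sub_I_smul_sq_sub_norm_add_I_smul_sq (u v : B) :
    ‖u - I • v‖ ^ 2 - ‖u + I • v‖ ^ 2 = 4 * (⟪u, v⟫).im := by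
  have hre : RCLike.re ⟪u, I • v⟫ = -(⟪u, v⟫).im := by simp
  rw [@norm_sub_sq ℂ, @norm_add_sq ℂ, hre]
  ring

theorem im_inner_nonneg_of_contraction {K : B →L[ℂ] B} (hK : ‖K‖ ≤ 1) {u v : B}
    (h : K (u - I • v) = u + I • v) : 0 ≤ (⟪u, v⟫).im := by
  have hle : ‖u + I • v‖ ≤ ‖u - I • v‖ := by
    simpa [h] using K.le_of_opNorm_le hK (u - I • v)
  have := norm_sub_I_smul_sq_sub_norm_add_I_smul_sq u v
  nlinarith [pow_le_pow_left₀ (norm_nonneg _) hle 2]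

theorem boundary_condition_iff (K : B →L[ℂ] B) (u v : B) :
    (K - 1) u - I • (K + 1) v = 0 ↔ K (u - I • v) = u + I • v := by
  simp only [sub_apply, add_apply, one_apply_eq_self, map_sub, map_smul]
  constructor <;> intro h <;> linear_combination (norm := module) h

end InnerProduct

namespace IsBoundaryTriplet

variable {E B : Type*} [NormedAddCommGroup E] [InnerProductSpace ℂ E] [CompleteSpace E]
  [NormedAddCommGroup B] [InnerProductSpace ℂ B]
  {T : E →ₗ.[ℂ] E} {Γ₁ Γ₂ : T.adjoint.domain →ₗ[ℂ] B}

theorem im_inner_self_adjoint (ht : IsBoundaryTriplet T Γ₁ Γ₂) (f : T.adjoint.domain) :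
    (⟪(f : E), T.adjoint f⟫).im = -(⟪Γ₁ f, Γ₂ f⟫).im := by
  have hg := congrArg im (ht.1 f f)
  simp only [sub_im] at hg
  rw [← inner_conj_symm (T.adjoint f : E), conj_im,
    ← inner_conj_symm (Γ₂ f), conj_im] at hg
  linarith

theorem im_inner_self_adjoint_nonpos (ht : IsBoundaryTriplet T Γ₁ Γ₂) {K : B →L[ℂ] B}
    (hK : ‖K‖ ≤ 1) {f : T.adjoint.domain}
    (hf : (K - 1) (Γ₁ f) - I • (K + 1) (Γ₂ f) = 0) :
    (⟪(f : E), T.adjoint f⟫).im ≤ 0 := by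
  have := im_inner_nonneg_of_contraction hK ((boundary_condition_iff K _ _).mp hf)
  rw [ht.im_inner_self_adjoint]
  linarith

theorem boundary_eq_zero_of_forall_inner_eq (ht : IsBoundaryTriplet T Γ₁ Γ₂)
    {f : T.adjoint.domain} (hf : ∀ g : T.adjoint.domain,
      ⟪T.adjoint f, (g : E)⟫ = ⟪(f : E), T.adjoint g⟫) :
    Γ₁ f = 0 ∧ Γ₂ f = 0 := by
  have hΓ : ∀ g, ⟪Γ₁ f, Γ₂ g⟫ = ⟪Γ₂ f, Γ₁ g⟫ := fun g =>
    sub_eq_zero.mp ((ht.1 f g).symm.trans (sub_eq_zero.mpr (hf g)))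
  obtain ⟨g₁, hg₁, hg₁'⟩ := ht.2 0 (Γ₁ f)
  obtain ⟨g₂, hg₂, hg₂'⟩ := ht.2 (Γ₂ f) 0
  have h₁ := hΓ g₁
  have h₂ := hΓ g₂
  rw [hg₁, hg₁', inner_zero_right] at h₁
  rw [hg₂, hg₂', inner_zero_right] at h₂
  exact ⟨inner_self_eq_zero.mp h₁, inner_self_eq_zero.mp h₂.symm⟩

theorem boundary_eq_zero_of_mem_domain (ht : IsBoundaryTriplet T Γ₁ Γ₂)
    (hd : Dense (T.domain : Set E)) (hsym : T.IsFormalAdjoint T)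
    {f : T.adjoint.domain} (hf : (f : E) ∈ T.domain) :
    Γ₁ f = 0 ∧ Γ₂ f = 0 := by
  refine ht.boundary_eq_zero_of_forall_inner_eq fun g => ?_
  have hTf : T.adjoint f = T ⟨f, hf⟩ := ((hsym.le_adjoint hd).2 rfl).symm
  rw [hTf, ← inner_conj_symm, ← T.adjoint_isFormalAdjoint hd g ⟨f, hf⟩, inner_conj_symm]

end IsBoundaryTriplet

theorem restriction_accumulative_extension_general
    {E B : Type*} [NormedAddCommGroup E] [InnerProductSpace ℂ E] [CompleteSpace E]
    [NormedAddCommGroup B] [InnerProductSpace ℂ B]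
    (T : E →ₗ.[ℂ] E)
    (hd : Dense (T.domain : Set E))
    (hsym : ∀ f g : T.domain, ⟪T f, (g : E)⟫ = ⟪(f : E), T g⟫)
    (Γ₁ Γ₂ : T.adjoint.domain →ₗ[ℂ] B) (ht : IsBoundaryTriplet T Γ₁ Γ₂)
    (K : B →L[ℂ] B) (hK : ‖K‖ ≤ 1) :
    -- `L^K` extends `T` : every `f ∈ Dom T` lies in `Dom L^K`
    (∀ f : T.domain, ∃ hf : (f : E) ∈ T.adjoint.domain,
      (K - 1) (Γ₁ ⟨(f : E), hf⟩) - Complex.I • ((K + 1) (Γ₂ ⟨(f : E), hf⟩)) = 0) ∧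
    -- `L^K` is accumulative : `Im (L^K f, f) ≤ 0` on its domain
    (∀ f : T.adjoint.domain,
      (K - 1) (Γ₁ f) - Complex.I • ((K + 1) (Γ₂ f)) = 0 →
      (⟪(f : E), T.adjoint f⟫).im ≤ 0) := by
  refine ⟨fun f => ?_, fun f hf => ht.im_inner_self_adjoint_nonpos hK hf⟩
  have hf : (f : E) ∈ T.adjoint.domain := (LinearPMap.IsFormalAdjoint.le_adjoint hd hsym).1 f.2
  obtain ⟨hΓ₁, hΓ₂⟩ := ht.boundary_eq_zero_of_mem_domain hd hsym (f := ⟨f, hf⟩) f.2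
  exact ⟨hf, by simp [hΓ₁, hΓ₂]⟩

/-- For a contraction `K`, the restriction `L^K` of `T*` by the boundary condition
`(K − I)Γ₁f − i(K + I)Γ₂f = 0` is an accumulative extension of `T`. -/
theorem restriction_accumulative_extension
    {E B : Type*} [NormedAddCommGroup E] [InnerProductSpace ℂ E] [CompleteSpace E]
    [NormedAddCommGroup B] [InnerProductSpace ℂ B]
    (T : E →ₗ.[ℂ] E)
    (hd : Dense (T.domain : Set E)) (hc : T.IsClosed)
    (hsym : ∀ f g : T.domain, ⟪T f, (g : E)⟫ = ⟪(f : E), T g⟫)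
    (Γ₁ Γ₂ : T.adjoint.domain →ₗ[ℂ] B) (ht : IsBoundaryTriplet T Γ₁ Γ₂)
    (K : B →L[ℂ] B) (hK : ‖K‖ ≤ 1) :
    -- `L^K` extends `T` : every `f ∈ Dom T` lies in `Dom L^K`
    (∀ f : T.domain, ∃ hf : (f : E) ∈ T.adjoint.domain,
      (K - 1) (Γ₁ ⟨(f : E), hf⟩) - Complex.I • ((K + 1) (Γ₂ ⟨(f : E), hf⟩)) = 0) ∧
    -- `L^K` is accumulative : `Im (L^K f, f) ≤ 0` on its domain
    (∀ f : T.adjoint.domain,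
      (K - 1) (Γ₁ f) - Complex.I • ((K + 1) (Γ₂ f)) = 0 →
      (⟪(f : E), T.adjoint f⟫).im ≤ 0) :=
  restriction_accumulative_extension_general T hd hsym Γ₁ Γ₂ ht K hK
end

section
/- Let K be a unitary matrix on Cⁿ. The subspace { (x, y) ∈ Cⁿ × Cⁿ : (K − I)x + i(K + I)y = 0 } is invariant under componentwise complex conjugation (x, y) ↦ (x̄, ȳ) if and only if K is symmetric, i.e., Kᵀ = K. -/
/-!
Write `L(K) = {(x, y) : (K - 1)x + i(K + 1)y = 0}`. Conjugating the defining equation and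
multiplying it by `-Kᵀ`, which is legitimate because `Kᴴ K = 1`, shows that the conjugate of
`L(K)` is `L(Kᵀ)`. Moreover `L(K)` determines `K`: the pairs `((K + 1)z, i(K - 1)z)` lie in
`L(K)`, and they lie in `L(K')` only if `(K' - K)z = 0`. So `L(K)` is conjugation invariant iff
`L(K) ⊆ L(Kᵀ)` iff `Kᵀ = K`.
-/

open Matrix Complex

section BoundaryForm

variable {ι : Type*} [Fintype ι] [DecidableEq ι]

def boundaryForm (K : Matrix ι ι ℂ) (x y : ι → ℂ) : ι → ℂ :=
  (K - 1) *ᵥ x + I • (K + 1) *ᵥ y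

theorem boundaryForm_param (K K' : Matrix ι ι ℂ) (z : ι → ℂ) :
    boundaryForm K' ((K + 1) *ᵥ z) (I • (K - 1) *ᵥ z) = (2 : ℂ) • (K' - K) *ᵥ z := by
  have hcomb : (K' - 1) * (K + 1) - (K' + 1) * (K - 1) = (2 : ℂ) • (K' - K) := by
    rw [two_smul]; noncomm_ring
  rw [boundaryForm, mulVec_smul, smul_smul, I_mul_I, neg_one_smul, mulVec_mulVec, mulVec_mulVec,
    ← sub_eq_add_neg, ← sub_mulVec, hcomb, smul_mulVec]

theorem eq_of_forall_boundaryForm_eq_zero_imp {K K' : Matrix ι ι ℂ}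
    (h : ∀ x y, boundaryForm K x y = 0 → boundaryForm K' x y = 0) : K' = K := by
  refine sub_eq_zero.mp (ext_iff_mulVec.mpr fun z => ?_)
  have hz := h ((K + 1) *ᵥ z) (I • (K - 1) *ᵥ z) <| by
    rw [boundaryForm_param, sub_self, zero_mulVec, smul_zero]
  rw [boundaryForm_param] at hz
  simpa [two_ne_zero] using hz

theorem transpose_mulVec_star_boundaryForm {K : Matrix ι ι ℂ} (hK : Kᴴ * K = 1) (x y : ι → ℂ) :
    Kᵀ *ᵥ star (boundaryForm K x y) = -boundaryForm Kᵀ (star x) (star y) := by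
  have h1 : (K - 1)ᴴ * K = -(K - 1) := by
    rw [conjTranspose_sub, conjTranspose_one, sub_mul, hK, one_mul]; abel
  have h2 : (K + 1)ᴴ * K = K + 1 := by
    rw [conjTranspose_add, conjTranspose_one, add_mul, hK, one_mul, add_comm]
  rw [boundaryForm, boundaryForm, mulVec_transpose, star_add, star_smul, star_mulVec, star_mulVec,
    add_vecMul, smul_vecMul, vecMul_vecMul, vecMul_vecMul, h1, h2, ← transpose_one,
    ← transpose_sub, ← transpose_add, mulVec_transpose, mulVec_transpose, vecMul_neg]
  simp only [transpose_one, RCLike.star_def, conj_I, neg_smul, neg_add_rev]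
  abel

theorem boundaryForm_star_eq_zero_iff {K : Matrix ι ι ℂ} (hK : K ∈ unitaryGroup ι ℂ)
    (x y : ι → ℂ) : boundaryForm K (star x) (star y) = 0 ↔ boundaryForm Kᵀ x y = 0 := by
  have hinj : Function.Injective (fun w : ι → ℂ => Kᵀ *ᵥ star w) := by
    simp only [mulVec_transpose]
    exact (vecMul_injective_of_isUnit (Unitary.isUnit_coe (U := ⟨K, hK⟩))).comp star_injective
  calc boundaryForm K (star x) (star y) = 0
      ↔ Kᵀ *ᵥ star (boundaryForm K (star x) (star y)) = 0 := (hinj.eq_iff' (by simp)).symm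
    _ ↔ boundaryForm Kᵀ x y = 0 := by
      rw [transpose_mulVec_star_boundaryForm (mem_unitaryGroup_iff'.mp hK), star_star, star_star,
        neg_eq_zero]

end BoundaryForm

/-- For a unitary `K`, the subspace `{(x, y) : (K − I)x + i(K + I)y = 0}` is invariant
under componentwise complex conjugation iff `K` is symmetric (`Kᵀ = K`). -/
theorem boundary_subspace_conjugation_invariant_iff_symmetric {n : ℕ}
    (K : Matrix (Fin n) (Fin n) ℂ) (hK : K ∈ Matrix.unitaryGroup (Fin n) ℂ) :
    (∀ x y : Fin n → ℂ,
        (K - 1).mulVec x + Complex.I • ((K + 1).mulVec y) = 0 →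
        (K - 1).mulVec (star x) + Complex.I • ((K + 1).mulVec (star y)) = 0) ↔
      K.transpose = K := by
  change (∀ x y, boundaryForm K x y = 0 → boundaryForm K (star x) (star y) = 0) ↔ Kᵀ = K
  simp only [boundaryForm_star_eq_zero_iff hK]
  exact ⟨eq_of_forall_boundaryForm_eq_zero_imp, fun h x y hxy => h ▸ hxy⟩
end

section
/- Let J : 𝓗 → 𝓗 be a conjugation (antilinear, involutive, isometric) on a complex Hilbert space and let A be a maximal dissipative operator with J Dom(A) = Dom(A) and JAJ = A (A is real with respect to J). Then A is self-adjoint. -/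
local notation "⟪" x ", " y "⟫" => @inner ℂ _ _ x y

/-!
Reality gives `Im ⟪J f, A (J f)⟫ = -Im ⟪f, A f⟫`, so a real dissipative operator has
`Im ⟪f, A f⟫ = 0` and is symmetric, `A ≤ A†`. Maximality then does two things. The closure
of `A` is still dissipative, so `A` is closed; and adjoining to `A` a vector `u` with
`A† u = i u` keeps the operator dissipative, so `ker (A† - i) = 0`. For closed dissipative
`A` the operator `A + i` is bounded below, hence has closed range, and the orthogonal
complement of that range is `ker (A† - i) = 0`: so `A + i` is onto. Finally `A†` is real as
well, so `J` maps `ker (A† + i)` into `ker (A† - i) = 0`; an extension `A†` of `A` with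
`A + i` onto and `A† + i` injective must equal `A`.
-/

open Complex ComplexConjugate

namespace LinearPMap

theorem eq_of_le_of_range_eq_top_of_ker_eq_bot {R M : Type*} [CommRing R] [AddCommGroup M]
    [Module R M] {S T : M →ₗ.[R] M} (c : R) (hle : S ≤ T)
    (hrange : LinearMap.range (S.toFun + c • S.domain.subtype) = ⊤)
    (hker : LinearMap.ker (T.toFun + c • T.domain.subtype) = ⊥) : T = S := by
  refine (eq_of_le_of_domain_eq hle (le_antisymm hle.1 fun g hg => ?_)).symm
  obtain ⟨f, hf⟩ := LinearMap.range_eq_top.mp hrange (T ⟨g, hg⟩ + c • g)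
  have hTf : T ⟨f, hle.1 f.2⟩ = S f := (hle.2 rfl).symm
  have hgf : (⟨g, hg⟩ : T.domain) - ⟨f, hle.1 f.2⟩ = 0 := by
    refine LinearMap.ker_eq_bot'.mp hker _ ?_
    change T (⟨g, hg⟩ - ⟨f, hle.1 f.2⟩) + c • (g - f) = 0
    rw [map_sub, hTf, smul_sub, sub_add_sub_comm, ← hf]
    exact sub_self _
  have hg_eq : g = f := congrArg Subtype.val (sub_eq_zero.mp hgf)
  exact hg_eq ▸ f.2

variable {E : Type*} [NormedAddCommGroup E] [InnerProductSpace ℂ E]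

def IsDissipative (A : E →ₗ.[ℂ] E) : Prop :=
  ∀ f : A.domain, 0 ≤ (⟪(f : E), A f⟫).im

def IsMaximalDissipative (A : E →ₗ.[ℂ] E) : Prop :=
  A.IsDissipative ∧ ∀ B : E →ₗ.[ℂ] E, B.IsDissipative → A ≤ B → B = A

def IsReal (A : E →ₗ.[ℂ] E) (J : E → E) : Prop :=
  ∀ f : A.domain, ∃ hf : J f ∈ A.domain, A ⟨J f, hf⟩ = J (A f)

variable {A : E →ₗ.[ℂ] E}

theorem isFormalAdjoint_self_of_im_inner_eq_zero
    (h : ∀ f : A.domain, (⟪(f : E), A f⟫).im = 0) : A.IsFormalAdjoint A := by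
  intro f g
  have hsum := h (f + g)
  have hrot := h (f + I • g)
  simp only [map_add, map_smul, Submodule.coe_add, Submodule.coe_smul, inner_add_left,
    inner_add_right, inner_smul_left, inner_smul_right, Complex.conj_I, Complex.add_im,
    Complex.add_re, Complex.mul_im, Complex.mul_re, Complex.neg_re, Complex.neg_im,
    Complex.I_re, Complex.I_im, h] at hsum hrot
  rw [← inner_conj_symm]
  apply Complex.ext <;> simp only [Complex.conj_re, Complex.conj_im] <;> linarith

theorem IsDissipative.im_inner_eq_zero_of_isReal {J : E → E} (hA : A.IsDissipative)
    (hJ_inner : ∀ f g : E, ⟪J f, J g⟫ = ⟪g, f⟫) (hreal : A.IsReal J) (f : A.domain) :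
    (⟪(f : E), A f⟫).im = 0 := by
  obtain ⟨hf, hAf⟩ := hreal f
  have hJf := hA ⟨J f, hf⟩
  rw [hAf, hJ_inner, ← inner_conj_symm, Complex.conj_im] at hJf
  linarith [hA f]

theorem IsDissipative.closure (hA : A.IsDissipative) (hcl : A.IsClosable) :
    A.closure.IsDissipative := by
  intro f
  let C : Set (E × E) := {p | 0 ≤ (⟪p.1, p.2⟫).im}
  have hC : _root_.IsClosed C :=
    isClosed_Ici.preimage (Complex.continuous_im.comp (continuous_fst.inner continuous_snd))
  have hgraph : (A.graph : Set (E × E)) ⊆ C := by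
    rintro _ hp
    obtain ⟨g, rfl⟩ := (A.mem_graph_iff').mp hp
    exact hA g
  have hf : ((f : E), A.closure f) ∈ _root_.closure (A.graph : Set (E × E)) := by
    rw [← Submodule.topologicalClosure_coe, hcl.graph_closure_eq_closure_graph]
    exact A.closure.mem_graph f
  exact closure_minimal hgraph hC hf

theorem IsMaximalDissipative.isClosed (hA : A.IsMaximalDissipative) (hcl : A.IsClosable) :
    A.IsClosed := by
  have hAcl : A.closure = A := hA.2 _ (hA.1.closure hcl) A.le_closure
  simpa only [hAcl] using hcl.closure_isClosed

theorem IsDissipative.norm_sq_add_norm_sq_le (hA : A.IsDissipative) (f : A.domain) :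
    ‖(f : E)‖ ^ 2 + ‖A f‖ ^ 2 ≤ ‖A f + I • (f : E)‖ ^ 2 := by
  have hre : (⟪A f, I • (f : E)⟫).re = (⟪(f : E), A f⟫).im := by
    rw [inner_smul_right, ← inner_conj_symm (f : E) (A f), Complex.conj_im]
    simp
  rw [@norm_add_sq ℂ, norm_smul, Complex.norm_I, one_mul]
  simp only [RCLike.re_to_complex, hre]
  linarith [hA f]

theorem IsDissipative.norm_graph_le (hA : A.IsDissipative) (f : A.domain) :
    ‖((f : E), A f)‖ ≤ ‖A f + I • (f : E)‖ := by
  have hsq := hA.norm_sq_add_norm_sq_le f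
  rw [Prod.norm_mk]
  apply max_le <;>
    nlinarith [norm_nonneg (f : E), norm_nonneg (A f), norm_nonneg (A f + I • (f : E))]

theorem IsDissipative.isClosed_range_add_I_smul [CompleteSpace E] (hA : A.IsDissipative)
    (hcl : A.IsClosed) :
    _root_.IsClosed (LinearMap.range (A.toFun + I • A.domain.subtype) : Set E) := by
  have : CompleteSpace A.graph := hcl.completeSpace_coe
  let L : A.graph →L[ℂ] E :=
    (ContinuousLinearMap.snd ℂ E E + I • ContinuousLinearMap.fst ℂ E E).comp A.graph.subtypeL
  have hL : AntilipschitzWith 1 L := L.antilipschitz_of_bound fun p => by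
    obtain ⟨f, hf⟩ := (A.mem_graph_iff').mp p.2
    simpa [L, ← hf] using hA.norm_graph_le f
  have hrange : Set.range L = LinearMap.range (A.toFun + I • A.domain.subtype) := by
    ext y
    constructor
    · rintro ⟨p, rfl⟩
      obtain ⟨f, hf⟩ := (A.mem_graph_iff').mp p.2
      exact ⟨f, by simp [L, ← hf]⟩
    · rintro ⟨f, rfl⟩
      exact ⟨⟨_, A.mem_graph f⟩, by simp [L]⟩
  rw [← hrange]
  exact hL.isClosed_range L.uniformContinuous

theorem IsReal.ker_add_I_smul_eq_bot {J : E → E}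
    (hJ_smul : ∀ (c : ℂ) (f : E), J (c • f) = conj c • J f)
    (hJ_invol : ∀ f : E, J (J f) = f)
    (hreal : A.IsReal J) (hker : LinearMap.ker (A.toFun - I • A.domain.subtype) = ⊥) :
    LinearMap.ker (A.toFun + I • A.domain.subtype) = ⊥ := by
  refine LinearMap.ker_eq_bot'.mpr fun v hv => Subtype.ext ?_
  replace hv : A v = -I • (v : E) := by rw [neg_smul]; exact eq_neg_of_add_eq_zero_left hv
  obtain ⟨hJv, hAJv⟩ := hreal v
  have hJv_eigen : A ⟨J v, hJv⟩ = I • J v := by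
    rw [hAJv, hv, hJ_smul]
    simp
  have hJv_zero : J v = 0 := congrArg Subtype.val <|
    LinearMap.ker_eq_bot'.mp hker ⟨J v, hJv⟩ (sub_eq_zero.mpr hJv_eigen)
  rw [← hJ_invol v, hJv_zero]
  simpa using hJ_smul 0 0

section Adjoint

variable [CompleteSpace E]

theorem adjoint_apply_eq_I_smul_of_forall_inner_eq_zero (hd : Dense (A.domain : Set E))
    {v : E} (hv : ∀ f : A.domain, ⟪v, A f + I • (f : E)⟫ = 0) :
    ∃ hv' : v ∈ A†.domain, A† ⟨v, hv'⟩ = I • v := by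
  have hinner (f : A.domain) : ⟪I • v, (f : E)⟫ = ⟪v, A f⟫ := by
    have := hv f
    rw [inner_add_right, inner_smul_right] at this
    rw [inner_smul_left, Complex.conj_I]
    linear_combination -this
  exact ⟨mem_adjoint_domain_of_exists _ ⟨_, hinner⟩, adjoint_apply_eq hd _ hinner⟩

theorem IsReal.adjoint (hd : Dense (A.domain : Set E)) {J : E → E}
    (hJ_invol : ∀ f : E, J (J f) = f) (hJ_inner : ∀ f g : E, ⟪J f, J g⟫ = ⟪g, f⟫)
    (hreal : A.IsReal J) : A†.IsReal J := by
  intro g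
  have hinner (x : A.domain) : ⟪J (A† g), (x : E)⟫ = ⟪J g, A x⟫ := by
    obtain ⟨hx, hAx⟩ := hreal x
    calc ⟪J (A† g), (x : E)⟫ = ⟪J (A† g), J (J x)⟫ := by rw [hJ_invol]
      _ = conj ⟪A† g, J x⟫ := by rw [hJ_inner, inner_conj_symm]
      _ = conj ⟪(g : E), A ⟨J x, hx⟩⟫ := by rw [adjoint_isFormalAdjoint hd g ⟨J x, hx⟩]
      _ = ⟪J g, J (A ⟨J x, hx⟩)⟫ := by rw [hJ_inner, inner_conj_symm]
      _ = ⟪J g, A x⟫ := by rw [hAx, hJ_invol]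
  exact ⟨mem_adjoint_domain_of_exists _ ⟨_, hinner⟩, adjoint_apply_eq hd _ hinner⟩

theorem im_inner_add_of_adjoint_apply_eq_I_smul (hd : Dense (A.domain : Set E))
    (a : A.domain) (w : A†.domain) (hw : A† w = I • (w : E)) :
    (⟪(a : E) + w, A a + I • (w : E)⟫).im = (⟪(a : E), A a⟫).im + ‖(w : E)‖ ^ 2 := by
  have hcross : ⟪(w : E), A a⟫ = -I * ⟪(w : E), a⟫ := by
    rw [← adjoint_isFormalAdjoint hd w a, hw, inner_smul_left, Complex.conj_I]
  rw [inner_add_left, inner_add_right, inner_add_right, hcross, inner_smul_right,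
    inner_smul_right, ← inner_conj_symm (w : E) (a : E)]
  simp only [Complex.add_im, Complex.mul_im, Complex.neg_re, Complex.neg_im, Complex.I_re,
    Complex.I_im, Complex.conj_re, Complex.conj_im]
  have hw2 : (⟪(w : E), (w : E)⟫).re = ‖(w : E)‖ ^ 2 :=
    inner_self_eq_norm_sq (𝕜 := ℂ) _
  linarith

theorem IsDissipative.adjoint_domRestrict_sup_span_singleton
    (hd : Dense (A.domain : Set E)) (hA : A.IsDissipative) (hle : A ≤ A†) {u : A†.domain}
    (hu : A† u = I • (u : E)) :
    (A†.domRestrict (A.domain ⊔ ℂ ∙ (u : E))).IsDissipative := by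
  intro f
  obtain ⟨a, ha, w, hw, hf⟩ := Submodule.mem_sup.mp f.2.1
  obtain ⟨c, rfl⟩ := Submodule.mem_span_singleton.mp hw
  have hcu : A† (c • u) = I • (c • u : E) := by rw [map_smul, hu, smul_comm]
  have hf_apply :
      A†.domRestrict (A.domain ⊔ ℂ ∙ (u : E)) f = A ⟨a, ha⟩ + I • (c • u : E) :=
    calc _ = A† (⟨a, hle.1 ha⟩ + c • u) := domRestrict_apply hf.symm
      _ = A ⟨a, ha⟩ + I • (c • u : E) := by
        rw [map_add, ← hle.2 (x := ⟨a, ha⟩) rfl, hcu]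
  have him := im_inner_add_of_adjoint_apply_eq_I_smul hd ⟨a, ha⟩ (c • u) hcu
  rw [Submodule.coe_smul] at him
  rw [hf_apply, ← hf, him]
  have := hA ⟨a, ha⟩
  positivity

theorem IsMaximalDissipative.ker_adjoint_sub_I_smul_eq_bot (hd : Dense (A.domain : Set E))
    (hA : A.IsMaximalDissipative) (hle : A ≤ A†) :
    LinearMap.ker (A†.toFun - I • A†.domain.subtype) = ⊥ := by
  refine LinearMap.ker_eq_bot'.mpr fun u hu => Subtype.ext ?_
  replace hu : A† u = I • (u : E) := sub_eq_zero.mp hu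
  let B := A†.domRestrict (A.domain ⊔ ℂ ∙ (u : E))
  have hAB : A ≤ B :=
    ⟨le_inf le_sup_left hle.1, fun x y hxy =>
      (hle.2 (y := ⟨y, y.2.2⟩) hxy).trans (domRestrict_apply rfl).symm⟩
  have huB : (u : E) ∈ B.domain :=
    ⟨Submodule.mem_sup_right (Submodule.mem_span_singleton_self _), u.2⟩
  rw [hA.2 B (hA.1.adjoint_domRestrict_sup_span_singleton hd hle hu) hAB] at huB
  have hsymm := adjoint_isFormalAdjoint hd u ⟨u, huB⟩
  rw [hu, hle.2 (x := ⟨u, huB⟩) (y := u) rfl, hu, inner_smul_left, inner_smul_right,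
    Complex.conj_I] at hsymm
  have hself : ⟪(u : E), (u : E)⟫ = 0 := by
    linear_combination (I / 2) * hsymm + ⟪(u : E), (u : E)⟫ * Complex.I_sq
  exact inner_self_eq_zero.mp hself

theorem IsMaximalDissipative.range_add_I_smul_eq_top (hd : Dense (A.domain : Set E))
    (hA : A.IsMaximalDissipative) (hle : A ≤ A†) :
    LinearMap.range (A.toFun + I • A.domain.subtype) = ⊤ := by
  set R := LinearMap.range (A.toFun + I • A.domain.subtype)
  have hcl : A.IsClosable := (adjoint_isClosed hd).isClosable.leIsClosable hle
  have hR_closed : _root_.IsClosed (R : Set E) :=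
    hA.1.isClosed_range_add_I_smul (hA.isClosed hcl)
  have hR_perp : Rᗮ = ⊥ := by
    refine (Submodule.eq_bot_iff _).mpr fun v hv => ?_
    obtain ⟨hv', hAv⟩ := adjoint_apply_eq_I_smul_of_forall_inner_eq_zero hd
      fun f => Submodule.inner_left_of_mem_orthogonal (LinearMap.mem_range_self _ f) hv
    exact congrArg Subtype.val <| LinearMap.ker_eq_bot'.mp
      (hA.ker_adjoint_sub_I_smul_eq_bot hd hle) ⟨v, hv'⟩ (sub_eq_zero.mpr hAv)
  rw [← hR_closed.submodule_topologicalClosure_eq, Submodule.topologicalClosure_eq_top_iff,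
    hR_perp]

end Adjoint

end LinearPMap

theorem real_maximal_dissipative_selfAdjoint_general {E : Type*} [NormedAddCommGroup E]
    [InnerProductSpace ℂ E] [CompleteSpace E]
    (J : E → E)
    (hJ_smul : ∀ (c : ℂ) (f : E), J (c • f) = (starRingEnd ℂ) c • J f)
    (hJ_invol : ∀ f : E, J (J f) = f)
    (hJ_inner : ∀ f g : E, ⟪J f, J g⟫ = ⟪g, f⟫)
    (A : E →ₗ.[ℂ] E)
    (hd : Dense (A.domain : Set E))
    (hdiss : ∀ f : A.domain, 0 ≤ (⟪(f : E), A f⟫).im)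
    (hmax : ∀ B : E →ₗ.[ℂ] E, (∀ f : B.domain, 0 ≤ (⟪(f : E), B f⟫).im) → A ≤ B → B = A)
    (hreal : ∀ f : A.domain, ∃ hf : J (f : E) ∈ A.domain, A ⟨J (f : E), hf⟩ = J (A f)) :
    A.adjoint = A := by
  have hA : A.IsMaximalDissipative := ⟨hdiss, hmax⟩
  have hAJ : A.IsReal J := hreal
  have hle : A ≤ A.adjoint :=
    (LinearPMap.isFormalAdjoint_self_of_im_inner_eq_zero
      (hA.1.im_inner_eq_zero_of_isReal hJ_inner hAJ)).le_adjoint hd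
  have hker : LinearMap.ker (A.adjoint.toFun + I • A.adjoint.domain.subtype) = ⊥ :=
    (hAJ.adjoint hd hJ_invol hJ_inner).ker_add_I_smul_eq_bot hJ_smul hJ_invol
      (hA.ker_adjoint_sub_I_smul_eq_bot hd hle)
  exact LinearPMap.eq_of_le_of_range_eq_top_of_ker_eq_bot I hle
    (hA.range_add_I_smul_eq_top hd hle) hker

/-- Let `J` be a conjugation (antilinear, involutive, isometric) on a complex Hilbert
space and let `A` be a maximal dissipative operator (no proper dissipative extension)
which is real with respect to `J` (`J Dom A = Dom A` and `JAJ = A`).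
Then `A` is self-adjoint. -/
theorem real_maximal_dissipative_selfAdjoint {E : Type*} [NormedAddCommGroup E]
    [InnerProductSpace ℂ E] [CompleteSpace E]
    (J : E → E)
    (hJ_add : ∀ f g : E, J (f + g) = J f + J g)
    (hJ_smul : ∀ (c : ℂ) (f : E), J (c • f) = (starRingEnd ℂ) c • J f)
    (hJ_invol : ∀ f : E, J (J f) = f)
    (hJ_inner : ∀ f g : E, ⟪J f, J g⟫ = ⟪g, f⟫)
    (A : E →ₗ.[ℂ] E)
    (hd : Dense (A.domain : Set E))
    (hdiss : ∀ f : A.domain, 0 ≤ (⟪(f : E), A f⟫).im)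
    (hmax : ∀ B : E →ₗ.[ℂ] E, (∀ f : B.domain, 0 ≤ (⟪(f : E), B f⟫).im) → A ≤ B → B = A)
    (hreal : ∀ f : A.domain, ∃ hf : J (f : E) ∈ A.domain, A ⟨J (f : E), hf⟩ = J (A f)) :
    A.adjoint = A :=
  real_maximal_dissipative_selfAdjoint_general J hJ_smul hJ_invol hJ_inner A hd hdiss hmax hreal
end

section
/- The Cayley-type parametrization of boundary conditions is bijective: for a boundary triplet (H, Γ₁, Γ₂) of a symmetric operator T with dim H < ∞, the map K ↦ { f ∈ Dom(T*) : (K − I)Γ₁f + i(K + I)Γ₂f = 0 } is injective on contractions; i.e., if two contractions K₁, K₂ on H define the same restriction of T*, then K₁ = K₂. -/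
open MeasureTheory

local notation "⟪" x ", " y "⟫" => @inner ℂ _ _ x y

/-!
The boundary condition `(K - 1) x + i (K + 1) y = 0` says `K (x + i y) = x - i y`. Since every
pair `(b, K b)` is of the form `(x + i y, x - i y)`, the boundary relation of `K` determines `K`,
and surjectivity of `(Γ₁, Γ₂)` lets the restriction of `T*` see the whole boundary relation.
-/

open Complex

lemma exists_add_I_smul_eq_and_sub_I_smul_eq {B : Type*} [AddCommGroup B] [Module ℂ B]
    (u v : B) : ∃ x y : B, x + I • y = u ∧ x - I • y = v := by
  have hI : I • (2⁻¹ : ℂ) • I • (v - u) = (2⁻¹ : ℂ) • (u - v) := by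
    rw [smul_comm, smul_smul I I, I_mul_I]
    module
  exact ⟨(2⁻¹ : ℂ) • (u + v), (2⁻¹ : ℂ) • I • (v - u), by rw [hI]; module, by rw [hI]; module⟩

section CayleyRelation

variable {B : Type*} [NormedAddCommGroup B] [NormedSpace ℂ B]

def cayleyRelation (K : B →L[ℂ] B) : Set (B × B) :=
  {p | (K - 1) p.1 + I • (K + 1) p.2 = 0}

lemma cayley_sub_one_add_I_smul_add_one_apply (K : B →L[ℂ] B) (x y : B) :
    (K - 1) x + I • (K + 1) y = K (x + I • y) - (x - I • y) := by
  simp only [sub_apply, add_apply, one_apply_eq_self, map_add, map_smul]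
  module

lemma mem_cayleyRelation_iff (K : B →L[ℂ] B) (x y : B) :
    (x, y) ∈ cayleyRelation K ↔ K (x + I • y) = x - I • y := by
  change (K - 1) x + I • (K + 1) y = 0 ↔ _
  rw [cayley_sub_one_add_I_smul_add_one_apply, sub_eq_zero]

lemma cayleyRelation_injective : Function.Injective (cayleyRelation (B := B)) := by
  intro K₁ K₂ h
  ext b
  obtain ⟨x, y, hb, hKb⟩ := exists_add_I_smul_eq_and_sub_I_smul_eq b (K₁ b)
  have hmem : (x, y) ∈ cayleyRelation K₁ := by
    rw [mem_cayleyRelation_iff, hb, hKb]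
  rw [h, mem_cayleyRelation_iff, hb, hKb] at hmem
  exact hmem.symm

end CayleyRelation

theorem boundary_condition_parametrization_injective_general
    {E B : Type*} [NormedAddCommGroup E] [InnerProductSpace ℂ E] [CompleteSpace E]
    [NormedAddCommGroup B] [InnerProductSpace ℂ B]
    (T : E →ₗ.[ℂ] E)
    (Γ₁ Γ₂ : T.adjoint.domain →ₗ[ℂ] B) (ht : IsBoundaryTriplet T Γ₁ Γ₂)
    (K₁ K₂ : B →L[ℂ] B)
    (hsame : ∀ f : T.adjoint.domain,
      (K₁ - 1) (Γ₁ f) + Complex.I • ((K₁ + 1) (Γ₂ f)) = 0 ↔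
      (K₂ - 1) (Γ₁ f) + Complex.I • ((K₂ + 1) (Γ₂ f)) = 0) :
    K₁ = K₂ := by
  obtain ⟨-, hsurj⟩ := ht
  refine cayleyRelation_injective (Set.ext fun ⟨x, y⟩ => ?_)
  obtain ⟨f, rfl, rfl⟩ := hsurj x y
  exact hsame f

/-- The Cayley-type parametrization of boundary conditions is injective on contractions:
two contractions defining the same restriction of `T*` coincide. -/
theorem boundary_condition_parametrization_injective
    {E B : Type*} [NormedAddCommGroup E] [InnerProductSpace ℂ E] [CompleteSpace E]
    [NormedAddCommGroup B] [InnerProductSpace ℂ B]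
    (T : E →ₗ.[ℂ] E)
    (hd : Dense (T.domain : Set E)) (hc : T.IsClosed)
    (hsym : ∀ f g : T.domain, ⟪T f, (g : E)⟫ = ⟪(f : E), T g⟫)
    (Γ₁ Γ₂ : T.adjoint.domain →ₗ[ℂ] B) (ht : IsBoundaryTriplet T Γ₁ Γ₂)
    [FiniteDimensional ℂ B]
    (K₁ K₂ : B →L[ℂ] B) (hK₁ : ‖K₁‖ ≤ 1) (hK₂ : ‖K₂‖ ≤ 1)
    (hsame : ∀ f : T.adjoint.domain,
      (K₁ - 1) (Γ₁ f) + Complex.I • ((K₁ + 1) (Γ₂ f)) = 0 ↔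
      (K₂ - 1) (Γ₁ f) + Complex.I • ((K₂ + 1) (Γ₂ f)) = 0) :
    K₁ = K₂ :=
  boundary_condition_parametrization_injective_general T Γ₁ Γ₂ ht K₁ K₂ hsame
end
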